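/- Suppose x* is primal-optimal and (p*, q*, r*) is dual-optimal with p* + q* > 0, and complementary slackness holds: x_i*·(v_i − wp_i·p* − (wp_i − C·ctr_i)·q* − r_i*) = 0 and (x_i* − 1)·r_i* = 0 for all i. Define bid_i* = (v_i + q*·C·ctr_i)/(p* + q*). Then for every i: if x_i* > 0 then bid_i* ≥ wp_i, and if x_i* = 0 then bid_i* ≤ wp_i. -/
import Mathlib

theorem optimal_bid_wins_iff
    (N : ℕ) (ctr cvr wp : Fin N → ℝ) (C : ℝ)
    (v : Fin N → ℝ) (hv : ∀ i, v i = ctr i * cvr i)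
    (hv0 : ∀ i, 0 ≤ v i) (hwp : ∀ i, 0 ≤ wp i) (hctr : ∀ i, 0 < ctr i)
    (hC : 0 < C)
    (x : Fin N → ℝ) (p q : ℝ) (r : Fin N → ℝ)
    (hx : ∀ i : Fin N, 0 ≤ x i ∧ x i ≤ 1)
    (hp : 0 ≤ p) (hq : 0 ≤ q) (hr : ∀ i, 0 ≤ r i)
    (hpq : 0 < p + q)
    (hdualfeas : ∀ i, wp i * p + (wp i - C * ctr i) * q + r i ≥ v i)
    (hcs1 : ∀ i, x i * (v i - wp i * p - (wp i - C * ctr i) * q - r i) = 0)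
    (hcs2 : ∀ i, (x i - 1) * r i = 0)
    (bid : Fin N → ℝ) (hbid : ∀ i, bid i = (v i + q * C * ctr i) / (p + q)) :
    ∀ i, (0 < x i → bid i ≥ wp i) ∧ (x i = 0 → bid i ≤ wp i) := by
  intro i
  constructor
  · intro hxi
    have h1 := hcs1 i
    have h2 : v i - wp i * p - (wp i - C * ctr i) * q - r i = 0 := by
      rcases mul_eq_zero.1 h1 with h | h
      · exact absurd h (ne_of_gt hxi)
      · exact h
    rw [hbid i, ge_iff_le, le_div_iff₀ hpq]
    nlinarith [hr i]
  · intro hxi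
    have h2 := hcs2 i
    rw [hxi] at h2
    have hri : r i = 0 := by linarith [mul_eq_zero.1 h2 |>.resolve_left (by norm_num)]
    have := hdualfeas i
    rw [hbid i, div_le_iff₀ hpq]
    nlinarith
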